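/- Define λ and Λ as given. Let ν be a finite signed Borel measure on (0,∞) with total mass ν((0,∞)) = 0, and assume ∫∫ (−λ(log x − log y)) d|ν|(x) d|ν|(y) < ∞, where |ν| is the total variation measure and −λ(0) is interpreted as +∞. Then ∫∫ (log|x−y| + Λ(x,y)) dν(x) dν(y) = ∫∫ λ(log x − log y) dν(x) dν(y) ≤ 0, with equality if and only if ν = 0. -/

import Mathlib

open MeasureTheory

/-- The two-body kernel `λ(Z) = (1/2)·log((e^Z − 1)²/(e^{2Z} + e^Z + 1))`. -/
noncomputable def lam (Z : ℝ) : ℝ :=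
  (1 / 2) * Real.log ((Real.exp Z - 1) ^ 2 / (Real.exp (2 * Z) + Real.exp Z + 1))

/-- The two-body interaction `Λ(x,y) = −(1/2)·log(x² + x·y + y²)`. -/
noncomputable def Lam (x y : ℝ) : ℝ := -(1 / 2) * Real.log (x ^ 2 + x * y + y ^ 2)

/-- The double integral `∫∫ f(x,y) dν(x) dν(y)` against a signed measure `ν`, computed via
its Jordan decomposition `ν = ν⁺ − ν⁻`. -/
noncomputable def dblInt (ν : SignedMeasure ℝ) (f : ℝ → ℝ → ℝ) : ℝ :=
  (∫ x, ∫ y, f x y ∂ν.toJordanDecomposition.posPart ∂ν.toJordanDecomposition.posPart)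
    - (∫ x, ∫ y, f x y ∂ν.toJordanDecomposition.negPart ∂ν.toJordanDecomposition.posPart)
    - (∫ x, ∫ y, f x y ∂ν.toJordanDecomposition.posPart ∂ν.toJordanDecomposition.negPart)
    + (∫ x, ∫ y, f x y ∂ν.toJordanDecomposition.negPart ∂ν.toJordanDecomposition.negPart)

set_option maxHeartbeats 1000000
lemma lam_nonpos (Z : ℝ) : lam Z ≤ 0 := by
  have h1 : (0:ℝ) < Real.exp (2*Z) + Real.exp Z + 1 := by positivity
  have h2 : (Real.exp Z - 1) ^ 2 ≤ Real.exp (2*Z) + Real.exp Z + 1 := by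
    have : Real.exp (2*Z) = Real.exp Z * Real.exp Z := by
      rw [two_mul, Real.exp_add]
    nlinarith [Real.exp_pos Z]
  have : (Real.exp Z - 1) ^ 2 / (Real.exp (2 * Z) + Real.exp Z + 1) ≤ 1 :=
    (div_le_one h1).mpr h2
  have hlog := Real.log_nonpos (by positivity) this
  unfold lam; linarith

lemma denom_pos {x y : ℝ} (hx : 0 < x) (hy : 0 < y) : 0 < x^2 + x*y + y^2 := by positivity

lemma lam_ratio {x y : ℝ} (hx : 0 < x) (hy : 0 < y) :
    lam (Real.log x - Real.log y) = 1/2 * Real.log ((x-y)^2 / (x^2 + x*y + y^2)) := by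
  have hy' : y ≠ 0 := ne_of_gt hy
  have he : Real.exp (Real.log x - Real.log y) = x / y := by
    rw [Real.exp_sub, Real.exp_log hx, Real.exp_log hy]
  have he2 : Real.exp (2 * (Real.log x - Real.log y)) = (x/y) * (x/y) := by
    rw [two_mul, Real.exp_add, he]
  unfold lam
  rw [he, he2]
  have hd : (0:ℝ) < x^2 + x*y + y^2 := denom_pos hx hy
  have harg : (x/y - 1)^2 / (x/y * (x/y) + x/y + 1) = (x-y)^2 / (x^2 + x*y + y^2) := by
    rw [div_eq_div_iff (by positivity) (ne_of_gt hd)]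
    field_simp
  rw [harg]

lemma pointwise_eq {x y : ℝ} (hx : 0 < x) (hy : 0 < y) (hxy : x ≠ y) :
    Real.log |x - y| + Lam x y = lam (Real.log x - Real.log y) := by
  rw [lam_ratio hx hy]
  have hd : (0:ℝ) < x^2 + x*y + y^2 := denom_pos hx hy
  have hne : (x - y)^2 ≠ 0 := pow_ne_zero _ (sub_ne_zero.mpr hxy)
  rw [Real.log_div hne (ne_of_gt hd)]
  have : Real.log ((x-y)^2) = 2 * Real.log |x - y| := by
    rw [← sq_abs, Real.log_pow]
    push_cast; ring
  rw [this]
  unfold Lam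
  ring

/-- coefficients of the expansion of `-lam` -/
noncomputable def coefR (n : ℕ) : ℝ := if 3 ∣ (n+1) then 0 else 3 / (2*(n+1))

lemma coefR_nonneg (n : ℕ) : 0 ≤ coefR n := by
  unfold coefR; split <;> positivity

lemma coefR_zero : coefR 0 = 3/2 := by norm_num [coefR]

lemma hasSum_coef {q : ℝ} (h0 : 0 < q) (h1 : q < 1) :
    HasSum (fun n => coefR n * q^(n+1))
      (-(1/2 * Real.log ((1-q)^2 / (1 + q + q^2)))) := by
  have habs : |q| < 1 := abs_lt.mpr ⟨by linarith, h1⟩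
  have habs3 : |q^3| < 1 := by
    rw [abs_pow]; exact pow_lt_one₀ (abs_nonneg q) habs (by norm_num)
  have hA : HasSum (fun n : ℕ => (3/2) * (q ^ (n+1) / (n+1)))
      ((3/2) * (-Real.log (1 - q))) :=
    (Real.hasSum_pow_div_log_of_abs_lt_one habs).mul_left _
  have hB0 : HasSum (fun n : ℕ => (1/2) * ((q^3) ^ (n+1) / (n+1)))
      ((1/2) * (-Real.log (1 - q^3))) :=
    (Real.hasSum_pow_div_log_of_abs_lt_one habs3).mul_left _
  -- h : the subseries of indices with 3 ∣ n+1
  set h : ℕ → ℝ := fun k => if 3 ∣ (k+1) then (3/2) * (q^(k+1)/(k+1)) else 0 with hh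
  have hinj : Function.Injective (fun n : ℕ => 3*n + 2) := by
    intro a b hab; simp only [] at hab; omega
  have hcomp : (h ∘ fun n : ℕ => 3*n+2) = fun n : ℕ => (1/2) * ((q^3) ^ (n+1) / (n+1)) := by
    funext n
    simp only [Function.comp, hh]
    rw [if_pos (by omega)]
    have hq : q ^ (3*n+2+1) = (q^3)^(n+1) := by rw [← pow_mul]; ring_nf
    rw [hq]
    have hn : ((n:ℝ)+1) ≠ 0 := by positivity
    push_cast
    field_simp
    ring
  have hB : HasSum h ((1/2) * (-Real.log (1 - q^3))) := by
    rw [← Function.Injective.hasSum_iff hinj ?_]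
    · rw [hcomp]; exact hB0
    · intro k hk
      simp only [hh]
      rw [if_neg]
      rintro ⟨d, hd⟩
      refine hk ⟨d - 1, ?_⟩
      show 3 * (d-1) + 2 = k
      omega
  have ht : (fun n => coefR n * q^(n+1)) =
      fun n => (3/2) * (q ^ (n+1) / (n+1)) - h n := by
    funext n
    simp only [hh, coefR]
    by_cases hd : 3 ∣ (n+1)
    · rw [if_pos hd, if_pos hd]; ring
    · rw [if_neg hd, if_neg hd]
      have hn : ((n+1:ℕ):ℝ) ≠ 0 := by positivity
      push_cast
      field_simp
      try ring
  rw [ht]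
  have hsum := hA.sub hB
  suffices hv : -(1/2 * Real.log ((1-q)^2 / (1 + q + q^2))) = 3 / 2 * -Real.log (1 - q) - 1 / 2 * -Real.log (1 - q ^ 3) by
    rw [hv]; exact hsum
  -- identity of logs
  have h1q : (0:ℝ) < 1 - q := by linarith
  have h1q3 : (0:ℝ) < 1 - q^3 := by
    have : q^3 < 1 := pow_lt_one₀ h0.le h1 (by norm_num)
    linarith
  have hden : (0:ℝ) < 1 + q + q^2 := by positivity
  have key : (1-q)^2 / (1 + q + q^2) = (1-q)^3 / (1 - q^3) := by
    rw [div_eq_div_iff (ne_of_gt hden) (ne_of_gt h1q3)]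
    ring
  rw [key, Real.log_div (by positivity) (ne_of_gt h1q3), Real.log_pow]
  push_cast
  ring

/-- the ratio min/max -/
noncomputable def rr (x y : ℝ) : ℝ := min x y / max x y

lemma rr_pos {x y : ℝ} (hx : 0 < x) (hy : 0 < y) : 0 < rr x y := by
  unfold rr
  exact div_pos (lt_min hx hy) (lt_max_of_lt_left hx)

lemma rr_lt_one {x y : ℝ} (hx : 0 < x) (hy : 0 < y) (hxy : x ≠ y) : rr x y < 1 := by
  unfold rr
  rw [div_lt_one (lt_max_of_lt_left hx)]
  rcases lt_or_gt_of_ne hxy with h | h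
  · rw [min_eq_left h.le, max_eq_right h.le]; exact h
  · rw [min_eq_right h.le, max_eq_left h.le]; exact h

lemma rr_le_one {x y : ℝ} (hx : 0 < x) (hy : 0 < y) : rr x y ≤ 1 := by
  unfold rr
  rw [div_le_one (lt_max_of_lt_left hx)]
  exact min_le_max

/-- The key series identity: for positive distinct x, y -/
lemma hasSum_neg_lam {x y : ℝ} (hx : 0 < x) (hy : 0 < y) (hxy : x ≠ y) :
    HasSum (fun n => coefR n * (rr x y)^(n+1)) (-(lam (Real.log x - Real.log y))) := by
  have h0 := rr_pos hx hy
  have h1 := rr_lt_one hx hy hxy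
  have := hasSum_coef h0 h1
  convert this using 2
  rw [lam_ratio hx hy]
  congr 2
  -- (x-y)^2/(x^2+xy+y^2) = (1-q)^2/(1+q+q^2) with q = min/max
  have hM : 0 < max x y := lt_max_of_lt_left hx
  have hMne : max x y ≠ 0 := ne_of_gt hM
  unfold rr
  rw [div_eq_div_iff (ne_of_gt (denom_pos hx hy)) (by positivity)]
  rcases le_total x y with h | h
  · rw [min_eq_left h, max_eq_right h]
    field_simp
    ring
  · rw [min_eq_right h, max_eq_left h]
    field_simp

/-- ENNReal coefficients -/
noncomputable def cE (n : ℕ) : ENNReal := ENNReal.ofReal (coefR n)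

lemma ofReal_neg_lam_eq_tsum {x y : ℝ} (hx : 0 < x) (hy : 0 < y) (hxy : x ≠ y) :
    ENNReal.ofReal (-(lam (Real.log x - Real.log y)))
      = ∑' n, cE n * ENNReal.ofReal ((rr x y)^(n+1)) := by
  have hs := hasSum_neg_lam hx hy hxy
  rw [← hs.tsum_eq]
  rw [ENNReal.ofReal_tsum_of_nonneg (fun n => mul_nonneg (coefR_nonneg n) (pow_nonneg (rr_pos hx hy).le _))
    hs.summable]
  congr 1
  funext n
  rw [ENNReal.ofReal_mul (coefR_nonneg n)]
  rfl

/-- weight `x ↦ (x⁻¹)^(n+1)` in `ℝ≥0∞` -/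
noncomputable def wgt (n : ℕ) (x : ℝ) : ENNReal := ENNReal.ofReal ((x⁻¹)^(n+1))

noncomputable def phi (n : ℕ) (s : ℝ) : ENNReal := ENNReal.ofReal ((2*(n:ℝ)+2) * s^(2*n+1))

lemma measurable_wgt (n : ℕ) : Measurable (wgt n) :=
  ENNReal.measurable_ofReal.comp ((measurable_id.inv).pow_const _)

lemma measurable_phi (n : ℕ) : Measurable (phi n) := by
  apply ENNReal.measurable_ofReal.comp
  exact (measurable_const.mul ((measurable_id.pow_const _)))

lemma wgt_ne_top (n : ℕ) (x : ℝ) : wgt n x ≠ ⊤ := ENNReal.ofReal_ne_top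
lemma phi_ne_top (n : ℕ) (s : ℝ) : phi n s ≠ ⊤ := ENNReal.ofReal_ne_top

/-- elementary integral: `∫_{(0,m)} (2n+2) s^{2n+1} ds = m^{2n+2}` -/
lemma lint_phi (n : ℕ) {m : ℝ} (hm : 0 < m) :
    ∫⁻ s in Set.Ioo 0 m, phi n s = ENNReal.ofReal (m^(2*n+2)) := by
  have hInt : IntervalIntegrable (fun s : ℝ => (2*(n:ℝ)+2) * s^(2*n+1)) volume 0 m :=
    (intervalIntegral.intervalIntegrable_pow (2*n+1)).const_mul _
  have hIntOn : IntegrableOn (fun s : ℝ => (2*(n:ℝ)+2) * s^(2*n+1)) (Set.Ioo 0 m) volume :=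
    ((intervalIntegrable_iff_integrableOn_Ioc_of_le hm.le).mp hInt).mono_set
      Set.Ioo_subset_Ioc_self
  have hnn : 0 ≤ᶠ[ae (volume.restrict (Set.Ioo 0 m))]
      (fun s : ℝ => (2*(n:ℝ)+2) * s^(2*n+1)) := by
    rw [Filter.EventuallyLE, ae_restrict_iff' measurableSet_Ioo]
    filter_upwards with s hs
    have : (0:ℝ) < s := hs.1
    positivity
  have hval : ∫ s in Set.Ioo 0 m, (2*(n:ℝ)+2) * s^(2*n+1) = m^(2*n+2) := by
    rw [← MeasureTheory.integral_Ioc_eq_integral_Ioo,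
      ← intervalIntegral.integral_of_le hm.le,
      intervalIntegral.integral_const_mul, integral_pow]
    have h1 : (2*n+1)+1 = 2*n+2 := by omega
    rw [h1]
    rw [zero_pow (by omega)]
    have h2 : ((2*n+1 : ℕ):ℝ) + 1 = 2*(n:ℝ)+2 := by push_cast; ring
    rw [h2]
    have : (2*(n:ℝ)+2) ≠ 0 := by positivity
    field_simp
    rw [sub_zero]
  unfold phi
  rw [← ofReal_integral_eq_lintegral_ofReal hIntOn hnn, hval]

/-- pointwise representation of `rr^{n+1}` as an integral over `s` -/
lemma point_rep (n : ℕ) {x y : ℝ} (hx : 0 < x) (hy : 0 < y) :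
    ENNReal.ofReal ((rr x y)^(n+1))
      = ∫⁻ s in Set.Ioi 0,
          (if s < x then wgt n x else 0) * (if s < y then wgt n y else 0) * phi n s := by
  set m := min x y with hm
  have hm0 : 0 < m := lt_min hx hy
  have hstep : ∫⁻ s in Set.Ioi 0,
      (if s < x then wgt n x else 0) * (if s < y then wgt n y else 0) * phi n s
      = ∫⁻ s in Set.Ioi 0,
        (Set.Ioo 0 m).indicator (fun s => wgt n x * wgt n y * phi n s) s := by
    apply setLIntegral_congr_fun_ae measurableSet_Ioi
    filter_upwards with s hs
    by_cases h : s < m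
    · rw [if_pos (lt_of_lt_of_le h (min_le_left _ _)),
        if_pos (lt_of_lt_of_le h (min_le_right _ _)),
        Set.indicator_of_mem (Set.mem_Ioo.mpr ⟨hs, h⟩)]
    · rw [Set.indicator_of_notMem (fun hmem => h hmem.2)]
      rcases min_le_iff.mp (not_lt.mp h) with h' | h'
      · rw [if_neg (not_lt.mpr h'), zero_mul, zero_mul]
      · rw [if_neg (not_lt.mpr h'), mul_zero, zero_mul]
  rw [hstep, lintegral_indicator measurableSet_Ioo,
    Measure.restrict_restrict measurableSet_Ioo,
    Set.inter_eq_left.mpr (fun s hs => hs.1)]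
  rw [lintegral_const_mul' _ _ (by exact ENNReal.mul_ne_top (wgt_ne_top n x) (wgt_ne_top n y)),
    lint_phi n hm0]
  -- now the real identity
  have hxne : x ≠ 0 := ne_of_gt hx
  have hyne : y ≠ 0 := ne_of_gt hy
  have hmne : m ≠ 0 := ne_of_gt hm0
  have hMne : max x y ≠ 0 := ne_of_gt (lt_max_of_lt_left hx)
  have key : rr x y = m^2 * (x*y)⁻¹ := by
    unfold rr
    rw [← min_mul_max x y, ← hm]
    field_simp
  have keyp : (rr x y)^(n+1) = (x⁻¹)^(n+1) * (y⁻¹)^(n+1) * m^(2*n+2) := by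
    rw [key, mul_pow, ← pow_mul]
    have h2 : 2*(n+1) = 2*n+2 := by ring
    rw [h2, mul_inv, mul_pow]
    ring
  rw [keyp]
  rw [ENNReal.ofReal_mul (by positivity), ENNReal.ofReal_mul (by positivity)]
  rfl

noncomputable def FF (μ : Measure ℝ) (n : ℕ) (s : ℝ) : ENNReal :=
  ∫⁻ x, (if s < x then wgt n x else 0) ∂μ

lemma measurable_rr : Measurable (fun p : ℝ × ℝ => rr p.1 p.2) := by
  apply Measurable.div
  · exact measurable_fst.min measurable_snd
  · exact measurable_fst.max measurable_snd

lemma measurable_FF (μ : Measure ℝ) [SFinite μ] (n : ℕ) : Measurable (FF μ n) := by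
  apply Measurable.lintegral_prod_right (f := fun s x => if s < x then wgt n x else 0)
  exact Measurable.ite (measurableSet_lt measurable_fst measurable_snd)
    ((measurable_wgt n).comp measurable_snd) measurable_const

lemma ae_fst_pos {a b : Measure ℝ} [IsFiniteMeasure a] [IsFiniteMeasure b]
    (ha : a ((Set.Ioi (0:ℝ))ᶜ) = 0) : ∀ᵐ p ∂(a.prod b), 0 < p.1 := by
  rw [Filter.eventually_iff, mem_ae_iff]
  have hset : {p : ℝ × ℝ | 0 < p.1}ᶜ = ((Set.Ioi (0:ℝ))ᶜ) ×ˢ (Set.univ : Set ℝ) := by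
    ext p; simp [Set.mem_prod]
  rw [hset, Measure.prod_prod, ha, zero_mul]

lemma ae_snd_pos {a b : Measure ℝ} [IsFiniteMeasure a] [IsFiniteMeasure b]
    (hb : b ((Set.Ioi (0:ℝ))ᶜ) = 0) : ∀ᵐ p ∂(a.prod b), 0 < p.2 := by
  rw [Filter.eventually_iff, mem_ae_iff]
  have hset : {p : ℝ × ℝ | 0 < p.2}ᶜ = (Set.univ : Set ℝ) ×ˢ ((Set.Ioi (0:ℝ))ᶜ) := by
    ext p; simp [Set.mem_prod]
  rw [hset, Measure.prod_prod, hb, mul_zero]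

lemma Mq_rep (n : ℕ) (a b : Measure ℝ) [IsFiniteMeasure a] [IsFiniteMeasure b]
    (ha : a ((Set.Ioi (0:ℝ))ᶜ) = 0) (hb : b ((Set.Ioi (0:ℝ))ᶜ) = 0) :
    ∫⁻ p, ENNReal.ofReal ((rr p.1 p.2)^(n+1)) ∂(a.prod b)
      = ∫⁻ s in Set.Ioi 0, FF a n s * FF b n s * phi n s := by
  set G : ℝ × ℝ → ℝ → ENNReal := fun p s =>
    (if s < p.1 then wgt n p.1 else 0) * (if s < p.2 then wgt n p.2 else 0) * phi n s with hG
  have hGmeas : Measurable (Function.uncurry G) := by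
    apply Measurable.mul
    apply Measurable.mul
    · exact Measurable.ite (measurableSet_lt measurable_snd (measurable_fst.fst))
        ((measurable_wgt n).comp (measurable_fst.fst)) measurable_const
    · exact Measurable.ite (measurableSet_lt measurable_snd (measurable_fst.snd))
        ((measurable_wgt n).comp (measurable_fst.snd)) measurable_const
    · exact (measurable_phi n).comp measurable_snd
  have step1 : ∫⁻ p, ENNReal.ofReal ((rr p.1 p.2)^(n+1)) ∂(a.prod b)
      = ∫⁻ p, (∫⁻ s in Set.Ioi (0:ℝ), G p s) ∂(a.prod b) := by
    apply lintegral_congr_ae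
    filter_upwards [ae_fst_pos ha, ae_snd_pos hb] with p h1 h2
    exact point_rep n h1 h2
  rw [step1]
  rw [lintegral_lintegral_swap hGmeas.aemeasurable]
  apply lintegral_congr
  intro s
  have : (fun p : ℝ × ℝ => G p s)
      = fun p : ℝ × ℝ =>
        ((fun x => if s < x then wgt n x else 0) p.1
          * (fun y => if s < y then wgt n y else 0) p.2) * phi n s := by
    rfl
  rw [this]
  rw [lintegral_mul_const' _ _ (phi_ne_top n s)]
  rw [lintegral_prod_mul
    (Measurable.ite measurableSet_Ioi (measurable_wgt n) measurable_const).aemeasurable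
    (Measurable.ite measurableSet_Ioi (measurable_wgt n) measurable_const).aemeasurable]
  rfl

lemma measurable_lam : Measurable lam := by
  unfold lam
  apply Measurable.const_mul
  apply Real.measurable_log.comp
  exact ((Real.measurable_exp.sub measurable_const).pow_const 2).div
    (((Real.measurable_exp.comp (measurable_id.const_mul 2)).add Real.measurable_exp).add
      measurable_const)

lemma measurable_nl2 : Measurable (fun p : ℝ × ℝ => -(lam (Real.log p.1 - Real.log p.2))) :=
  (measurable_lam.comp ((Real.measurable_log.comp measurable_fst).sub
    (Real.measurable_log.comp measurable_snd))).neg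

lemma measurable_neglam2 :
    Measurable (fun p : ℝ × ℝ => ENNReal.ofReal (-(lam (Real.log p.1 - Real.log p.2)))) :=
  measurable_nl2.ennreal_ofReal

/-- the integrand in `hint` -/
noncomputable def big (x y : ℝ) : ENNReal :=
  if x = y then (⊤ : ENNReal) else ENNReal.ofReal (-(lam (Real.log x - Real.log y)))

lemma measurable_big : Measurable (Function.uncurry big) := by
  unfold big Function.uncurry
  exact Measurable.ite (measurableSet_eq_fun measurable_fst measurable_snd) measurable_const
    measurable_neglam2

lemma ofReal_neglam_le_big (x y : ℝ) :
    ENNReal.ofReal (-(lam (Real.log x - Real.log y))) ≤ big x y := by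
  unfold big; split
  · exact le_top
  · exact le_rfl

lemma ae_singleton_zero (T : Measure ℝ) [IsFiniteMeasure T]
    (hint : (∫⁻ x, ∫⁻ y, big x y ∂T ∂T) < ⊤) : ∀ᵐ x ∂T, T {x} = 0 := by
  have hg : Measurable (fun x => ∫⁻ y, big x y ∂T) :=
    Measurable.lintegral_prod_right measurable_big
  filter_upwards [ae_lt_top hg hint.ne] with x hx
  have h1 : (⊤ : ENNReal) * T {x} ≤ ∫⁻ y, big x y ∂T := by
    calc (⊤ : ENNReal) * T {x} = big x x * T {x} := by rw [big, if_pos rfl]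
    _ = ∫⁻ y in {x}, big x y ∂T := (lintegral_singleton _ _).symm
    _ ≤ ∫⁻ y, big x y ∂T := setLIntegral_le_lintegral _ _
  by_contra h
  rw [ENNReal.top_mul h] at h1
  exact absurd (lt_of_le_of_lt h1 hx) (lt_irrefl ⊤)

lemma diag_null {a b T : Measure ℝ} [IsFiniteMeasure a] [IsFiniteMeasure b] [IsFiniteMeasure T]
    (hA : a ≤ T) (hB : b ≤ T) (hsing : ∀ᵐ x ∂T, T {x} = 0) :
    (a.prod b) {p : ℝ × ℝ | p.1 = p.2} = 0 := by
  have hdm : MeasurableSet {p : ℝ × ℝ | p.1 = p.2} :=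
    measurableSet_eq_fun measurable_fst measurable_snd
  rw [Measure.prod_apply hdm]
  have : ∀ᵐ x ∂a, b (Prod.mk x ⁻¹' {p : ℝ × ℝ | p.1 = p.2}) = 0 := by
    filter_upwards [(ae_mono hA) hsing] with x hx
    have hpre : (Prod.mk x ⁻¹' {p : ℝ × ℝ | p.1 = p.2}) = {x} := by
      ext y; simp [eq_comm]
    rw [hpre]
    exact le_antisymm (le_trans (hB _ ) hx.le) zero_le
  rw [lintegral_congr_ae this, lintegral_zero]

lemma ae_pos_of_conc {a T : Measure ℝ} (hA : a ≤ T) (hT : T ((Set.Ioi (0:ℝ))ᶜ) = 0) :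
    ∀ᵐ x ∂a, 0 < x := by
  rw [ae_iff]
  have : {x : ℝ | ¬ 0 < x} = (Set.Ioi (0:ℝ))ᶜ := by ext x; simp
  rw [this]
  exact le_antisymm (le_trans (hA _) hT.le) zero_le

lemma partA {a b T : Measure ℝ} [IsFiniteMeasure a] [IsFiniteMeasure b] [IsFiniteMeasure T]
    (hA : a ≤ T) (hB : b ≤ T) (hT : T ((Set.Ioi (0:ℝ))ᶜ) = 0)
    (hsing : ∀ᵐ x ∂T, T {x} = 0) :
    ∫ x, (∫ y, (Real.log |x - y| + Lam x y) ∂b) ∂a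
      = ∫ x, (∫ y, lam (Real.log x - Real.log y) ∂b) ∂a := by
  apply integral_congr_ae
  have hbs : ∀ᵐ x ∂a, b {x} = 0 := by
    filter_upwards [(ae_mono hA) hsing] with x hx
    exact le_antisymm (le_trans (hB _) hx.le) zero_le
  filter_upwards [hbs, ae_pos_of_conc hA hT] with x hbx hx
  apply integral_congr_ae
  have h2 : ∀ᵐ y ∂b, y ≠ x := by
    rw [ae_iff]
    have : {y : ℝ | ¬ y ≠ x} = {x} := by ext y; simp
    rw [this]; exact hbx
  filter_upwards [ae_pos_of_conc hB hT, h2] with y hy hyx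
  exact pointwise_eq hx hy (Ne.symm hyx)

lemma conv {a b : Measure ℝ} [IsFiniteMeasure a] [IsFiniteMeasure b]
    (hfin : (∫⁻ x, ∫⁻ y, ENNReal.ofReal (-(lam (Real.log x - Real.log y))) ∂b ∂a) ≠ ⊤) :
    ∫ x, (∫ y, lam (Real.log x - Real.log y) ∂b) ∂a
      = -(∫⁻ x, ∫⁻ y, ENNReal.ofReal (-(lam (Real.log x - Real.log y))) ∂b ∂a).toReal := by
  have hmeasK : ∀ x : ℝ, Measurable (fun y => -(lam (Real.log x - Real.log y))) := by
    intro x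
    exact (measurable_lam.comp (measurable_const.sub Real.measurable_log)).neg
  have hinner : ∀ x : ℝ, ∫ y, lam (Real.log x - Real.log y) ∂b
      = -((∫⁻ y, ENNReal.ofReal (-(lam (Real.log x - Real.log y))) ∂b).toReal) := by
    intro x
    have h1 : ∫ y, lam (Real.log x - Real.log y) ∂b
        = -∫ y, -(lam (Real.log x - Real.log y)) ∂b := by
      rw [integral_neg]; ring
    rw [h1, integral_eq_lintegral_of_nonneg_ae
      (Filter.Eventually.of_forall (fun y => neg_nonneg.mpr (lam_nonpos _)))
      (hmeasK x).aestronglyMeasurable]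
  have hmeasL : Measurable (fun x => ∫⁻ y, ENNReal.ofReal (-(lam (Real.log x - Real.log y))) ∂b) := by
    apply Measurable.lintegral_prod_right
      (f := fun x y => ENNReal.ofReal (-(lam (Real.log x - Real.log y))))
    exact measurable_neglam2
  calc ∫ x, (∫ y, lam (Real.log x - Real.log y) ∂b) ∂a
      = ∫ x, -((∫⁻ y, ENNReal.ofReal (-(lam (Real.log x - Real.log y))) ∂b).toReal) ∂a := by
        apply integral_congr_ae
        exact Filter.Eventually.of_forall hinner
    _ = -∫ x, (∫⁻ y, ENNReal.ofReal (-(lam (Real.log x - Real.log y))) ∂b).toReal ∂a := by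
        rw [integral_neg]
    _ = -(∫⁻ x, ∫⁻ y, ENNReal.ofReal (-(lam (Real.log x - Real.log y))) ∂b ∂a).toReal := by
        rw [integral_toReal hmeasL.aemeasurable (ae_lt_top hmeasL hfin)]

lemma enn_amgm (u v : ENNReal) : u*v + v*u ≤ u*u + v*v := by
  by_cases hu : u = ⊤
  · by_cases hv0 : v = 0
    · simp [hu, hv0]
    · have h : u * u = ⊤ := by rw [hu]; exact ENNReal.top_mul_top
      simp [ENNReal.add_eq_top, h]
  · by_cases hv : v = ⊤
    · by_cases hu0 : u = 0
      · simp [hv, hu0]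
      · have h : v * v = ⊤ := by rw [hv]; exact ENNReal.top_mul_top
        simp [ENNReal.add_eq_top, h]
    · rw [← ENNReal.toReal_le_toReal (by finiteness) (by finiteness)]
      rw [ENNReal.toReal_add (by finiteness) (by finiteness),
        ENNReal.toReal_add (by finiteness) (by finiteness)]
      rw [ENNReal.toReal_mul, ENNReal.toReal_mul, ENNReal.toReal_mul, ENNReal.toReal_mul]
      nlinarith [sq_nonneg (u.toReal - v.toReal)]

lemma enn_amgm_eq {u v : ENNReal} (hu : u ≠ ⊤) (hv : v ≠ ⊤)
    (h : u*u + v*v ≤ u*v + v*u) : u = v := by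
  have h' : u*u + v*v = u*v + v*u := le_antisymm h (enn_amgm u v)
  have h2 : (u*u + v*v).toReal = (u*v + v*u).toReal := by rw [h']
  rw [ENNReal.toReal_add (by finiteness) (by finiteness),
    ENNReal.toReal_add (by finiteness) (by finiteness),
    ENNReal.toReal_mul, ENNReal.toReal_mul, ENNReal.toReal_mul, ENNReal.toReal_mul] at h2
  have : u.toReal = v.toReal := by nlinarith [sq_nonneg (u.toReal - v.toReal)]
  rwa [ENNReal.toReal_eq_toReal_iff' hu hv] at this

lemma measures_eq (a b : Measure ℝ) [IsFiniteMeasure a] [IsFiniteMeasure b]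
    (hapos : a ((Set.Ioi (0:ℝ))ᶜ) = 0) (hbpos : b ((Set.Ioi (0:ℝ))ᶜ) = 0)
    (h : ∀ᵐ s ∂(volume.restrict (Set.Ioi (0:ℝ))), FF a 0 s = FF b 0 s) : a = b := by
  set w : ℝ → ENNReal := fun x => ENNReal.ofReal x⁻¹ with hw
  have hwm : Measurable w := measurable_inv.ennreal_ofReal
  set ρa := a.withDensity w with hρa
  set ρb := b.withDensity w with hρb
  have hFF : ∀ (μ : Measure ℝ) (s : ℝ), FF μ 0 s = (μ.withDensity w) (Set.Ioi s) := by
    intro μ s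
    rw [withDensity_apply _ measurableSet_Ioi, ← lintegral_indicator measurableSet_Ioi]
    unfold FF
    apply lintegral_congr
    intro x
    rw [Set.indicator_apply]
    simp only [Set.mem_Ioi, wgt, zero_add, pow_one, hw]
  have htail : ∀ (μ : Measure ℝ) [IsFiniteMeasure μ], ∀ s : ℝ, 0 < s →
      (μ.withDensity w) (Set.Ioi s) ≠ ⊤ := by
    intro μ _ s hs
    rw [withDensity_apply _ measurableSet_Ioi]
    have hb : ∫⁻ x in Set.Ioi s, w x ∂μ ≤ ∫⁻ _ in Set.Ioi s, ENNReal.ofReal s⁻¹ ∂μ := by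
      apply setLIntegral_mono measurable_const
      intro x hx
      exact ENNReal.ofReal_le_ofReal (inv_anti₀ hs (le_of_lt hx))
    refine ne_top_of_le_ne_top ?_ hb
    rw [setLIntegral_const]
    finiteness
  set Bad : Set ℝ := {s | FF a 0 s ≠ FF b 0 s} with hBad
  have hBadm : MeasurableSet Bad := by
    have h1 : {s : ℝ | FF a 0 s = FF b 0 s}
        = {s | FF a 0 s ≤ FF b 0 s} ∩ {s | FF b 0 s ≤ FF a 0 s} := by
      ext s
      simp only [Set.mem_setOf_eq, Set.mem_inter_iff, le_antisymm_iff]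
    have h2 : MeasurableSet {s : ℝ | FF a 0 s = FF b 0 s} := by
      rw [h1]
      exact (measurableSet_le (measurable_FF a 0) (measurable_FF b 0)).inter
        (measurableSet_le (measurable_FF b 0) (measurable_FF a 0))
    exact h2.compl
  have hBadnull : volume (Bad ∩ Set.Ioi (0:ℝ)) = 0 := by
    rw [ae_iff, Measure.restrict_apply hBadm] at h
    exact h
  -- all tails agree
  have key : ∀ s : ℝ, 0 < s → ρa (Set.Ioi s) = ρb (Set.Ioi s) := by
    intro s hs
    have hpick : ∀ k : ℕ, ∃ t : ℝ, t ∈ (Set.Ioo s (s + 1/((k:ℝ)+1))) \ Bad := by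
      intro k
      rcases Set.eq_empty_or_nonempty ((Set.Ioo s (s + 1/((k:ℝ)+1))) \ Bad) with hemp | hne
      · exfalso
        have hsub : Set.Ioo s (s + 1/((k:ℝ)+1)) ⊆ Bad ∩ Set.Ioi 0 := by
          intro t ht
          refine ⟨?_, lt_trans hs ht.1⟩
          by_contra htB
          exact (Set.eq_empty_iff_forall_notMem.mp hemp t) ⟨ht, htB⟩
        have h0 := measure_mono_null hsub hBadnull
        rw [Real.volume_Ioo] at h0
        have he : s + 1/((k:ℝ)+1) - s = 1/((k:ℝ)+1) := by ring
        rw [he] at h0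
        have hp : (0:ℝ) < 1/((k:ℝ)+1) := by positivity
        exact absurd h0 (ne_of_gt (ENNReal.ofReal_pos.mpr hp))
      · exact hne
    choose t ht using hpick
    have hunion : Set.Ioi s = ⋃ k, Set.Ioi (t k) := by
      ext u
      simp only [Set.mem_Ioi, Set.mem_iUnion]
      constructor
      · intro hu
        obtain ⟨k, hk⟩ := exists_nat_one_div_lt (sub_pos.mpr hu)
        have := (ht k).1.2
        exact ⟨k, by linarith⟩
      · rintro ⟨k, hk⟩
        exact lt_trans (ht k).1.1 hk
    have hdir : Directed (· ⊆ ·) (fun k => Set.Ioi (t k)) := by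
      intro i j
      rcases le_total (t i) (t j) with hij | hij
      · exact ⟨i, subset_rfl, Set.Ioi_subset_Ioi hij⟩
      · exact ⟨j, Set.Ioi_subset_Ioi hij, subset_rfl⟩
    have hgood : ∀ k, ρa (Set.Ioi (t k)) = ρb (Set.Ioi (t k)) := by
      intro k
      have hnB : t k ∉ Bad := (ht k).2
      have heq : FF a 0 (t k) = FF b 0 (t k) := not_not.mp hnB
      rw [hFF a, hFF b] at heq
      exact heq
    rw [hunion, Directed.measure_iUnion hdir, Directed.measure_iUnion hdir]
    exact iSup_congr hgood
  -- restricted measures agree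
  have hres : ∀ k : ℕ, ρa.restrict (Set.Ioi (1/((k:ℝ)+1))) = ρb.restrict (Set.Ioi (1/((k:ℝ)+1))) := by
    intro k
    set ε := 1/((k:ℝ)+1) with hε
    have hε0 : 0 < ε := by positivity
    have hfina : IsFiniteMeasure (ρa.restrict (Set.Ioi ε)) :=
      ⟨by rw [Measure.restrict_apply_univ]; exact Ne.lt_top (htail a ε hε0)⟩
    apply Measure.ext_of_Iic
    intro c
    rw [Measure.restrict_apply measurableSet_Iic, Measure.restrict_apply measurableSet_Iic]
    have hIic : Set.Iic c ∩ Set.Ioi ε = Set.Ioc ε c := by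
      ext u; simp only [Set.mem_inter_iff, Set.mem_Iic, Set.mem_Ioi, Set.mem_Ioc]; tauto
    rw [hIic]
    rcases le_or_gt ε c with hc | hc
    · have hIoc : Set.Ioc ε c = Set.Ioi ε \ Set.Ioi c := by
        ext u
        simp only [Set.mem_Ioc, Set.mem_diff, Set.mem_Ioi, not_lt]
        try tauto
      have hcpos : 0 < c := lt_of_lt_of_le hε0 hc
      rw [hIoc,
        measure_diff (Set.Ioi_subset_Ioi hc) measurableSet_Ioi.nullMeasurableSet (htail a c hcpos),
        measure_diff (Set.Ioi_subset_Ioi hc) measurableSet_Ioi.nullMeasurableSet (htail b c hcpos),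
        key ε hε0, key c hcpos]
    · rw [Set.Ioc_eq_empty (not_lt.mpr hc.le), measure_empty, measure_empty]
  -- conclude a = b
  ext S hS
  have hsplit : ∀ (μ : Measure ℝ), μ ((Set.Ioi (0:ℝ))ᶜ) = 0 → μ S = μ (S ∩ Set.Ioi 0) := by
    intro μ hμ
    rw [← measure_inter_add_diff S measurableSet_Ioi]
    have hz : μ (S \ Set.Ioi 0) = 0 := measure_mono_null (fun x hx => hx.2) hμ
    rw [hz, add_zero]
  rw [hsplit a hapos, hsplit b hbpos]
  have hcup : S ∩ Set.Ioi (0:ℝ) = ⋃ k : ℕ, S ∩ Set.Ioi (1/((k:ℝ)+1)) := by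
    ext u
    simp only [Set.mem_inter_iff, Set.mem_iUnion, Set.mem_Ioi]
    constructor
    · rintro ⟨hu1, hu2⟩
      obtain ⟨k, hk⟩ := exists_nat_one_div_lt hu2
      exact ⟨k, hu1, hk⟩
    · rintro ⟨k, hu1, hk⟩
      exact ⟨hu1, lt_trans (by positivity) hk⟩
  have hdir2 : Directed (· ⊆ ·) (fun k : ℕ => S ∩ Set.Ioi (1/((k:ℝ)+1))) := by
    apply Monotone.directed_le
    intro i j hij
    apply Set.inter_subset_inter_right
    apply Set.Ioi_subset_Ioi
    have hcast : ((i:ℝ)+1) ≤ ((j:ℝ)+1) := by exact_mod_cast Nat.succ_le_succ hij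
    exact one_div_le_one_div_of_le (by positivity) hcast
  rw [hcup, Directed.measure_iUnion hdir2, Directed.measure_iUnion hdir2]
  apply iSup_congr
  intro k
  set ε := 1/((k:ℝ)+1) with hε
  have hε0 : 0 < ε := by positivity
  have hsub : S ∩ Set.Ioi ε ⊆ Set.Ioi ε := Set.inter_subset_right
  have hmeasSE : MeasurableSet (S ∩ Set.Ioi ε) := hS.inter measurableSet_Ioi
  have hback : ∀ (μ : Measure ℝ), μ (S ∩ Set.Ioi ε)
      = ∫⁻ x in S ∩ Set.Ioi ε, ENNReal.ofReal x ∂(μ.withDensity w) := by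
    intro μ
    rw [show (∫⁻ x in S ∩ Set.Ioi ε, ENNReal.ofReal x ∂(μ.withDensity w))
        = ∫⁻ x in S ∩ Set.Ioi ε, (w * fun x => ENNReal.ofReal x) x ∂μ from
      setLIntegral_withDensity_eq_setLIntegral_mul _ hwm
        (by exact measurable_id.ennreal_ofReal) hmeasSE]
    have hone : ∀ᵐ x ∂μ, x ∈ S ∩ Set.Ioi ε → (w * fun x => ENNReal.ofReal x) x = 1 := by
      apply Filter.Eventually.of_forall
      intro x hx
      have hx0 : 0 < x := lt_trans hε0 hx.2
      simp only [hw, Pi.mul_apply]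
      rw [← ENNReal.ofReal_mul (by positivity), inv_mul_cancel₀ (ne_of_gt hx0)]
      simp
    rw [setLIntegral_congr_fun_ae hmeasSE hone, setLIntegral_one]
  rw [hback a, hback b]
  have hrr : ∀ (ρ : Measure ℝ), ∫⁻ x in S ∩ Set.Ioi ε, ENNReal.ofReal x ∂ρ
      = ∫⁻ x in S ∩ Set.Ioi ε, ENNReal.ofReal x ∂(ρ.restrict (Set.Ioi ε)) := by
    intro ρ
    rw [Measure.restrict_restrict hmeasSE, Set.inter_eq_left.mpr hsub]
  rw [show a.withDensity w = ρa from rfl, show b.withDensity w = ρb from rfl, hrr ρa, hrr ρb,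
    hres k]

lemma FF_ne_top (μ : Measure ℝ) [IsFiniteMeasure μ] (n : ℕ) {s : ℝ} (hs : 0 < s) :
    FF μ n s ≠ ⊤ := by
  have hle : FF μ n s ≤ ∫⁻ _, ENNReal.ofReal ((s⁻¹)^(n+1)) ∂μ := by
    apply lintegral_mono
    intro x
    show (if s < x then wgt n x else 0) ≤ ENNReal.ofReal ((s⁻¹)^(n+1))
    by_cases h : s < x
    · rw [if_pos h]
      unfold wgt
      apply ENNReal.ofReal_le_ofReal
      apply pow_le_pow_left₀ (inv_nonneg.mpr (le_of_lt (lt_trans hs h)))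
      exact inv_anti₀ hs h.le
    · rw [if_neg h]; exact zero_le
  refine ne_top_of_le_ne_top ?_ hle
  rw [lintegral_const]
  finiteness

lemma phi_ne_zero (n : ℕ) {s : ℝ} (hs : 0 < s) : phi n s ≠ 0 := by
  unfold phi
  refine ne_of_gt (ENNReal.ofReal_pos.mpr ?_)
  positivity

lemma cE_ne_top (n : ℕ) : cE n ≠ ⊤ := ENNReal.ofReal_ne_top

lemma cE_zero_ne : cE 0 ≠ 0 := by
  unfold cE
  rw [coefR_zero]
  simp [ENNReal.ofReal_eq_zero]

lemma L_tsum {a b T : Measure ℝ} [IsFiniteMeasure a] [IsFiniteMeasure b] [IsFiniteMeasure T]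
    (hA : a ≤ T) (hB : b ≤ T) (hTc : T ((Set.Ioi (0:ℝ))ᶜ) = 0)
    (hsing : ∀ᵐ x ∂T, T {x} = 0) :
    (∫⁻ x, ∫⁻ y, ENNReal.ofReal (-(lam (Real.log x - Real.log y))) ∂b ∂a)
      = ∑' n, cE n * (∫⁻ s in Set.Ioi (0:ℝ), FF a n s * FF b n s * phi n s) := by
  have hac : a ((Set.Ioi (0:ℝ))ᶜ) = 0 := le_antisymm (le_trans (hA _) hTc.le) zero_le
  have hbc : b ((Set.Ioi (0:ℝ))ᶜ) = 0 := le_antisymm (le_trans (hB _) hTc.le) zero_le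
  have step0 : (∫⁻ x, ∫⁻ y, ENNReal.ofReal (-(lam (Real.log x - Real.log y))) ∂b ∂a)
      = ∫⁻ p, ENNReal.ofReal (-(lam (Real.log p.1 - Real.log p.2))) ∂(a.prod b) :=
    (lintegral_prod _ measurable_neglam2.aemeasurable).symm
  rw [step0]
  have hae : ∀ᵐ p ∂(a.prod b), ENNReal.ofReal (-(lam (Real.log p.1 - Real.log p.2)))
      = ∑' n, cE n * ENNReal.ofReal ((rr p.1 p.2)^(n+1)) := by
    have hne : ∀ᵐ p ∂(a.prod b), p.1 ≠ p.2 := by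
      rw [ae_iff]
      have hset : {p : ℝ × ℝ | ¬ p.1 ≠ p.2} = {p : ℝ × ℝ | p.1 = p.2} := by ext p; simp
      rw [hset]
      exact diag_null hA hB hsing
    filter_upwards [ae_fst_pos hac, ae_snd_pos hbc, hne] with p h1 h2 h3
    exact ofReal_neg_lam_eq_tsum h1 h2 h3
  rw [lintegral_congr_ae hae,
    lintegral_tsum (fun n =>
      (((measurable_rr.pow_const (n+1)).ennreal_ofReal).const_mul _).aemeasurable)]
  congr 1
  funext n
  rw [lintegral_const_mul' (cE n) _ (cE_ne_top n), Mq_rep n a b hac hbc]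

lemma quad_ineq (a b : Measure ℝ) [SFinite a] [SFinite b] (n : ℕ) :
    (∫⁻ s in Set.Ioi (0:ℝ), FF a n s * FF b n s * phi n s)
      + (∫⁻ s in Set.Ioi (0:ℝ), FF b n s * FF a n s * phi n s)
    ≤ (∫⁻ s in Set.Ioi (0:ℝ), FF a n s * FF a n s * phi n s)
      + (∫⁻ s in Set.Ioi (0:ℝ), FF b n s * FF b n s * phi n s) := by
  rw [← lintegral_add_left (f := fun s => FF a n s * FF b n s * phi n s) (((measurable_FF a n).mul (measurable_FF b n)).mul (measurable_phi n)),
    ← lintegral_add_left (f := fun s => FF a n s * FF a n s * phi n s) (((measurable_FF a n).mul (measurable_FF a n)).mul (measurable_phi n))]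
  apply lintegral_mono
  intro s
  calc FF a n s * FF b n s * phi n s + FF b n s * FF a n s * phi n s
      = (FF a n s * FF b n s + FF b n s * FF a n s) * phi n s := by ring
    _ ≤ (FF a n s * FF a n s + FF b n s * FF b n s) * phi n s :=
        mul_le_mul_left (enn_amgm _ _) _
    _ = FF a n s * FF a n s * phi n s + FF b n s * FF b n s * phi n s := by ring

theorem conifold_stmt8 (ν : SignedMeasure ℝ)
    (hconc : ν.totalVariation ((Set.Ioi (0:ℝ))ᶜ) = 0)
    (hmass : ν Set.univ = 0)
    (hint : (∫⁻ x, ∫⁻ y,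
        (if x = y then (⊤ : ENNReal)
          else ENNReal.ofReal (-(lam (Real.log x - Real.log y))))
        ∂ν.totalVariation ∂ν.totalVariation) < ⊤) :
    dblInt ν (fun x y => Real.log |x - y| + Lam x y)
        = dblInt ν (fun x y => lam (Real.log x - Real.log y)) ∧
    dblInt ν (fun x y => lam (Real.log x - Real.log y)) ≤ 0 ∧
    (dblInt ν (fun x y => lam (Real.log x - Real.log y)) = 0 ↔ ν = 0) := by
  -- reverse direction of the iff, proved first
  have hrev : ν = 0 → dblInt ν (fun x y => lam (Real.log x - Real.log y)) = 0 := by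
    intro h
    rw [h]
    unfold dblInt
    rw [SignedMeasure.toJordanDecomposition_zero, JordanDecomposition.zero_posPart,
      JordanDecomposition.zero_negPart]
    simp
  have hTdef : ν.totalVariation
      = ν.toJordanDecomposition.posPart + ν.toJordanDecomposition.negPart := rfl
  haveI : IsFiniteMeasure ν.totalVariation := by rw [hTdef]; infer_instance
  have hint' : (∫⁻ x, ∫⁻ y, big x y ∂ν.totalVariation ∂ν.totalVariation) < ⊤ := hint
  have hsing : ∀ᵐ x ∂ν.totalVariation, ν.totalVariation {x} = 0 :=
    ae_singleton_zero ν.totalVariation hint'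
  have hple : ν.toJordanDecomposition.posPart ≤ ν.totalVariation := by
    rw [hTdef]; exact Measure.le_add_right le_rfl
  have hnle : ν.toJordanDecomposition.negPart ≤ ν.totalVariation := by
    rw [hTdef]; exact Measure.le_add_left le_rfl
  have hpc : ν.toJordanDecomposition.posPart ((Set.Ioi (0:ℝ))ᶜ) = 0 :=
    le_antisymm (le_trans (hple _) hconc.le) zero_le
  have hnc : ν.toJordanDecomposition.negPart ((Set.Ioi (0:ℝ))ᶜ) = 0 :=
    le_antisymm (le_trans (hnle _) hconc.le) zero_le
  -- finiteness of all four iterated integrals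
  have hfin : ∀ (a b : Measure ℝ), a ≤ ν.totalVariation → b ≤ ν.totalVariation →
      (∫⁻ x, ∫⁻ y, ENNReal.ofReal (-(lam (Real.log x - Real.log y))) ∂b ∂a) ≠ ⊤ := by
    intro a b hA hB
    have h1 : (∫⁻ x, ∫⁻ y, ENNReal.ofReal (-(lam (Real.log x - Real.log y))) ∂b ∂a)
        ≤ ∫⁻ x, ∫⁻ y, big x y ∂ν.totalVariation ∂ν.totalVariation := by
      calc (∫⁻ x, ∫⁻ y, ENNReal.ofReal (-(lam (Real.log x - Real.log y))) ∂b ∂a)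
          ≤ ∫⁻ x, ∫⁻ y, big x y ∂ν.totalVariation ∂a := by
            apply lintegral_mono
            intro x
            calc ∫⁻ y, ENNReal.ofReal (-(lam (Real.log x - Real.log y))) ∂b
                ≤ ∫⁻ y, big x y ∂b := lintegral_mono (ofReal_neglam_le_big x)
              _ ≤ ∫⁻ y, big x y ∂ν.totalVariation := lintegral_mono' hB le_rfl
        _ ≤ _ := lintegral_mono' hA le_rfl
    exact ne_top_of_le_ne_top hint'.ne h1
  have hfpp := hfin _ _ hple hple
  have hfpn := hfin _ _ hple hnle
  have hfnp := hfin _ _ hnle hple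
  have hfnn := hfin _ _ hnle hnle
  -- tsum representations
  have hLpp := L_tsum hple hple hconc hsing
  have hLpn := L_tsum hple hnle hconc hsing
  have hLnp := L_tsum hnle hple hconc hsing
  have hLnn := L_tsum hnle hnle hconc hsing
  -- Part 1: the two double integrals agree
  have part1 : dblInt ν (fun x y => Real.log |x - y| + Lam x y)
      = dblInt ν (fun x y => lam (Real.log x - Real.log y)) := by
    simp only [dblInt]
    rw [partA hple hple hconc hsing, partA hple hnle hconc hsing,
      partA hnle hple hconc hsing, partA hnle hnle hconc hsing]
  -- expression for dblInt of lam
  have hdbl : dblInt ν (fun x y => lam (Real.log x - Real.log y))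
      = (∫⁻ x, ∫⁻ y, ENNReal.ofReal (-(lam (Real.log x - Real.log y)))
            ∂ν.toJordanDecomposition.negPart ∂ν.toJordanDecomposition.posPart).toReal
        + (∫⁻ x, ∫⁻ y, ENNReal.ofReal (-(lam (Real.log x - Real.log y)))
            ∂ν.toJordanDecomposition.posPart ∂ν.toJordanDecomposition.negPart).toReal
        - (∫⁻ x, ∫⁻ y, ENNReal.ofReal (-(lam (Real.log x - Real.log y)))
            ∂ν.toJordanDecomposition.posPart ∂ν.toJordanDecomposition.posPart).toReal
        - (∫⁻ x, ∫⁻ y, ENNReal.ofReal (-(lam (Real.log x - Real.log y)))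
            ∂ν.toJordanDecomposition.negPart ∂ν.toJordanDecomposition.negPart).toReal := by
    simp only [dblInt]
    rw [conv hfpp, conv hfpn, conv hfnp, conv hfnn]
    ring
  -- the comparison N ≤ P
  have hNP : (∫⁻ x, ∫⁻ y, ENNReal.ofReal (-(lam (Real.log x - Real.log y)))
        ∂ν.toJordanDecomposition.negPart ∂ν.toJordanDecomposition.posPart)
      + (∫⁻ x, ∫⁻ y, ENNReal.ofReal (-(lam (Real.log x - Real.log y)))
        ∂ν.toJordanDecomposition.posPart ∂ν.toJordanDecomposition.negPart)
      ≤ (∫⁻ x, ∫⁻ y, ENNReal.ofReal (-(lam (Real.log x - Real.log y)))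
        ∂ν.toJordanDecomposition.posPart ∂ν.toJordanDecomposition.posPart)
      + (∫⁻ x, ∫⁻ y, ENNReal.ofReal (-(lam (Real.log x - Real.log y)))
        ∂ν.toJordanDecomposition.negPart ∂ν.toJordanDecomposition.negPart) := by
    rw [hLpn, hLnp, hLpp, hLnn, ← ENNReal.tsum_add, ← ENNReal.tsum_add]
    apply ENNReal.tsum_le_tsum
    intro n
    rw [← mul_add, ← mul_add]
    exact mul_le_mul_right (quad_ineq _ _ n) _
  refine ⟨part1, ?_, ?_, hrev⟩
  · -- nonpositivity
    rw [hdbl]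
    have h1 := ENNReal.toReal_mono (ENNReal.add_ne_top.mpr ⟨hfpp, hfnn⟩) hNP
    rw [ENNReal.toReal_add hfpn hfnp, ENNReal.toReal_add hfpp hfnn] at h1
    · linarith
  · -- equality implies ν = 0
    intro h0
    rw [hdbl] at h0
    have hNPeq : (∫⁻ x, ∫⁻ y, ENNReal.ofReal (-(lam (Real.log x - Real.log y)))
          ∂ν.toJordanDecomposition.negPart ∂ν.toJordanDecomposition.posPart)
        + (∫⁻ x, ∫⁻ y, ENNReal.ofReal (-(lam (Real.log x - Real.log y)))
          ∂ν.toJordanDecomposition.posPart ∂ν.toJordanDecomposition.negPart)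
        = (∫⁻ x, ∫⁻ y, ENNReal.ofReal (-(lam (Real.log x - Real.log y)))
          ∂ν.toJordanDecomposition.posPart ∂ν.toJordanDecomposition.posPart)
        + (∫⁻ x, ∫⁻ y, ENNReal.ofReal (-(lam (Real.log x - Real.log y)))
          ∂ν.toJordanDecomposition.negPart ∂ν.toJordanDecomposition.negPart) := by
      rw [← ENNReal.toReal_eq_toReal_iff' (ENNReal.add_ne_top.mpr ⟨hfpn, hfnp⟩)
        (ENNReal.add_ne_top.mpr ⟨hfpp, hfnn⟩)]
      rw [ENNReal.toReal_add hfpn hfnp, ENNReal.toReal_add hfpp hfnn]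
      linarith
    -- pass to termwise equality
    set A : ℕ → ENNReal := fun n =>
      cE n * ((∫⁻ s in Set.Ioi (0:ℝ), FF ν.toJordanDecomposition.posPart n s
          * FF ν.toJordanDecomposition.posPart n s * phi n s)
        + (∫⁻ s in Set.Ioi (0:ℝ), FF ν.toJordanDecomposition.negPart n s
          * FF ν.toJordanDecomposition.negPart n s * phi n s)) with hA
    set B : ℕ → ENNReal := fun n =>
      cE n * ((∫⁻ s in Set.Ioi (0:ℝ), FF ν.toJordanDecomposition.posPart n s
          * FF ν.toJordanDecomposition.negPart n s * phi n s)
        + (∫⁻ s in Set.Ioi (0:ℝ), FF ν.toJordanDecomposition.negPart n s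
          * FF ν.toJordanDecomposition.posPart n s * phi n s)) with hB
    have hBA : ∀ n, B n ≤ A n := fun n => mul_le_mul_right (quad_ineq _ _ n) _
    have htsumA : ∑' n, A n
        = (∫⁻ x, ∫⁻ y, ENNReal.ofReal (-(lam (Real.log x - Real.log y)))
          ∂ν.toJordanDecomposition.posPart ∂ν.toJordanDecomposition.posPart)
        + (∫⁻ x, ∫⁻ y, ENNReal.ofReal (-(lam (Real.log x - Real.log y)))
          ∂ν.toJordanDecomposition.negPart ∂ν.toJordanDecomposition.negPart) := by
      rw [hLpp, hLnn, ← ENNReal.tsum_add]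
      congr 1; funext n; simp only [hA, mul_add]
    have htsumB : ∑' n, B n
        = (∫⁻ x, ∫⁻ y, ENNReal.ofReal (-(lam (Real.log x - Real.log y)))
          ∂ν.toJordanDecomposition.posPart ∂ν.toJordanDecomposition.negPart)
        + (∫⁻ x, ∫⁻ y, ENNReal.ofReal (-(lam (Real.log x - Real.log y)))
          ∂ν.toJordanDecomposition.negPart ∂ν.toJordanDecomposition.posPart) := by
      rw [hLpn, hLnp, ← ENNReal.tsum_add]
      congr 1; funext n
      simp only [hB, mul_add]
      exact add_comm _ _
    have hsumeq : ∑' n, A n = ∑' n, B n := by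
      rw [htsumA, htsumB]
      rw [hNPeq.symm]
      exact (add_comm _ _)
    have hBfin : ∑' n, B n ≠ ⊤ := by
      rw [htsumB]
      exact ENNReal.add_ne_top.mpr ⟨hfnp, hfpn⟩
    have hterm : ∀ n, A n = B n := by
      have hz : ∑' n, (A n - B n) = 0 := by
        rw [ENNReal.tsum_sub hBfin hBA, hsumeq, tsub_self]
      intro n
      have := ENNReal.tsum_eq_zero.mp hz n
      exact le_antisymm (tsub_eq_zero_iff_le.mp this) (hBA n)
    -- extract n = 0
    have hAfin : A 0 ≠ ⊤ := by
      refine ne_top_of_le_ne_top ?_ (ENNReal.le_tsum 0)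
      rw [htsumA]
      exact ENNReal.add_ne_top.mpr ⟨hfpp, hfnn⟩
    have h0eq := hterm 0
    rw [hA, hB] at h0eq
    have hXY : (∫⁻ s in Set.Ioi (0:ℝ), FF ν.toJordanDecomposition.posPart 0 s
          * FF ν.toJordanDecomposition.posPart 0 s * phi 0 s)
        + (∫⁻ s in Set.Ioi (0:ℝ), FF ν.toJordanDecomposition.negPart 0 s
          * FF ν.toJordanDecomposition.negPart 0 s * phi 0 s)
        = (∫⁻ s in Set.Ioi (0:ℝ), FF ν.toJordanDecomposition.posPart 0 s
          * FF ν.toJordanDecomposition.negPart 0 s * phi 0 s)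
        + (∫⁻ s in Set.Ioi (0:ℝ), FF ν.toJordanDecomposition.negPart 0 s
          * FF ν.toJordanDecomposition.posPart 0 s * phi 0 s) := by
      have hcE : cE 0 ≠ ⊤ := ENNReal.ofReal_ne_top
      exact le_antisymm ((ENNReal.mul_le_mul_iff_right cE_zero_ne hcE).mp h0eq.le)
        ((ENNReal.mul_le_mul_iff_right cE_zero_ne hcE).mp h0eq.ge)
    -- analysis at n = 0
    set u : ℝ → ENNReal := FF ν.toJordanDecomposition.posPart 0 with hudef
    set v : ℝ → ENNReal := FF ν.toJordanDecomposition.negPart 0 with hvdef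
    have hmu : Measurable u := measurable_FF _ 0
    have hmv : Measurable v := measurable_FF _ 0
    have hXcomb : (∫⁻ s in Set.Ioi (0:ℝ), u s * u s * phi 0 s)
        + (∫⁻ s in Set.Ioi (0:ℝ), v s * v s * phi 0 s)
        = ∫⁻ s in Set.Ioi (0:ℝ), (u s * u s * phi 0 s + v s * v s * phi 0 s) :=
      (lintegral_add_left ((hmu.mul hmu).mul (measurable_phi 0)) _).symm
    have hYcomb : (∫⁻ s in Set.Ioi (0:ℝ), u s * v s * phi 0 s)
        + (∫⁻ s in Set.Ioi (0:ℝ), v s * u s * phi 0 s)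
        = ∫⁻ s in Set.Ioi (0:ℝ), (u s * v s * phi 0 s + v s * u s * phi 0 s) :=
      (lintegral_add_left ((hmu.mul hmv).mul (measurable_phi 0)) _).symm
    rw [hXcomb, hYcomb] at hXY
    have hsle : ∀ s, u s * v s * phi 0 s + v s * u s * phi 0 s
        ≤ u s * u s * phi 0 s + v s * v s * phi 0 s := by
      intro s
      calc u s * v s * phi 0 s + v s * u s * phi 0 s
          = (u s * v s + v s * u s) * phi 0 s := by ring
        _ ≤ (u s * u s + v s * v s) * phi 0 s := mul_le_mul_left (enn_amgm _ _) _
        _ = u s * u s * phi 0 s + v s * v s * phi 0 s := by ring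
    have hXfin : (∫⁻ s in Set.Ioi (0:ℝ), (u s * u s * phi 0 s + v s * v s * phi 0 s)) ≠ ⊤ := by
      intro htop
      rw [hA] at hAfin
      apply hAfin
      simp only []
      rw [hXcomb, htop, ENNReal.mul_top cE_zero_ne]
    have hYfin : (∫⁻ s in Set.Ioi (0:ℝ), (u s * v s * phi 0 s + v s * u s * phi 0 s)) ≠ ⊤ :=
      ne_top_of_le_ne_top hXfin (lintegral_mono hsle)
    have hsmallmeas : Measurable (fun s => u s * v s * phi 0 s + v s * u s * phi 0 s) :=
      ((hmu.mul hmv).mul (measurable_phi 0)).add ((hmv.mul hmu).mul (measurable_phi 0))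
    have hbigmeas : Measurable (fun s => u s * u s * phi 0 s + v s * v s * phi 0 s) :=
      ((hmu.mul hmu).mul (measurable_phi 0)).add ((hmv.mul hmv).mul (measurable_phi 0))
    have hzero : ∫⁻ s in Set.Ioi (0:ℝ),
        ((u s * u s * phi 0 s + v s * v s * phi 0 s)
          - (u s * v s * phi 0 s + v s * u s * phi 0 s)) = 0 := by
      rw [lintegral_sub hsmallmeas hYfin (Filter.Eventually.of_forall hsle), hXY]
      exact tsub_self _
    have hae0 := (lintegral_eq_zero_iff' ((hbigmeas.sub hsmallmeas).aemeasurable)).mp hzero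
    have haeeq : ∀ᵐ s ∂(volume.restrict (Set.Ioi (0:ℝ))), u s = v s := by
      filter_upwards [hae0, ae_restrict_mem measurableSet_Ioi] with s hs0 hsmem
      have hsmem' : (0:ℝ) < s := hsmem
      have hle2 : u s * u s * phi 0 s + v s * v s * phi 0 s
          ≤ u s * v s * phi 0 s + v s * u s * phi 0 s := by
        have : (u s * u s * phi 0 s + v s * v s * phi 0 s)
            - (u s * v s * phi 0 s + v s * u s * phi 0 s) = 0 := hs0
        exact tsub_eq_zero_iff_le.mp this
      have h1 : (u s * u s + v s * v s) * phi 0 s ≤ (u s * v s + v s * u s) * phi 0 s := by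
        calc (u s * u s + v s * v s) * phi 0 s
            = u s * u s * phi 0 s + v s * v s * phi 0 s := by ring
          _ ≤ u s * v s * phi 0 s + v s * u s * phi 0 s := hle2
          _ = (u s * v s + v s * u s) * phi 0 s := by ring
      have h2 : u s * u s + v s * v s ≤ u s * v s + v s * u s :=
        (ENNReal.mul_le_mul_iff_left (phi_ne_zero 0 hsmem') (phi_ne_top 0 s)).mp h1
      exact enn_amgm_eq (FF_ne_top _ 0 hsmem') (FF_ne_top _ 0 hsmem') h2
    have hpn_eq : ν.toJordanDecomposition.posPart = ν.toJordanDecomposition.negPart :=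
      measures_eq _ _ hpc hnc haeeq
    obtain ⟨S, hSm, hS1, hS2⟩ := ν.toJordanDecomposition.mutuallySingular
    have hp0 : ν.toJordanDecomposition.posPart = 0 := by
      rw [← Measure.measure_univ_eq_zero, ← measure_add_measure_compl hSm, hS1, zero_add,
        hpn_eq]
      exact hS2
    have hn0 : ν.toJordanDecomposition.negPart = 0 := by rw [← hpn_eq]; exact hp0
    have hJ : ν.toJordanDecomposition = (0 : SignedMeasure ℝ).toJordanDecomposition := by
      rw [SignedMeasure.toJordanDecomposition_zero]
      ext1
      · rw [hp0]; rfl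
      · rw [hn0]; rfl
    calc ν = ν.toJordanDecomposition.toSignedMeasure :=
          (SignedMeasure.toSignedMeasure_toJordanDecomposition ν).symm
      _ = (0 : SignedMeasure ℝ).toJordanDecomposition.toSignedMeasure := by rw [hJ]
      _ = 0 := SignedMeasure.toSignedMeasure_toJordanDecomposition 0
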